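/- Let G be an m-uniform hypergraph with at least one edge, with adjacency tensor A(G) and spectral radius ρ. If G is disconnected, then the projective eigenvariety PV_ρ(A(G)) has dimension greater than zero (is infinite) if and only if G has at least two connected components, each on at least two vertices, whose spectral radius equals ρ. -/

import Mathlib

/-!
Each component `C` with an edge carries a Perron vector: a maximizer of `∑_e ∏_{v ∈ e} y_v` on
the nonnegative part of the unit `ℓ^m`-sphere is positive (by connectedness) and an eigenvector,
and by Collatz–Wielandt its eigenvalue is the spectral radius `ρ(C)`. The equality case of
Collatz–Wielandt shows that every eigenvector of `C` for `ρ(C)` is `c · z · ω` with each `ω v`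
an `m`-th root of unity. An eigenvector of `A(G)` for `ρ = ρ(G) > 0` vanishes on isolated
vertices and restricts to an eigenvector for `ρ` on every other component it meets; as
`ρ(C) ≤ ρ`, such a component has `ρ(C) = ρ`. If there is only one such component, `PV_ρ` is
thus finite; if there are two, with Perron vectors `x₁, x₂`, then `t ↦ [x₁ + t x₂]` embeds `ℂ`
into `PV_ρ`.
-/

open scoped BigOperators

namespace PaperTensor

/-- A tensor of order `m` and dimension `|ι|`: entry `A i f` is `a_{i, f 0, …, f (m-2)}`. -/
abbrev Tensor (ι : Type) (m : ℕ) : Type := ι → (Fin (m - 1) → ι) → ℂ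

variable {ι : Type} [Fintype ι] {m : ℕ}

/-- `(A x^{m-1})_i = ∑ a_{i i₂ … i_m} x_{i₂} ⋯ x_{i_m}`. -/
noncomputable def tApp (A : Tensor ι m) (x : ι → ℂ) (i : ι) : ℂ :=
  ∑ f : Fin (m - 1) → ι, A i f * ∏ j, x (f j)

/-- `x ≠ 0` and `A x^{m-1} = l x^{[m-1]}`. -/
def IsEigPair (A : Tensor ι m) (l : ℂ) (x : ι → ℂ) : Prop :=
  x ≠ 0 ∧ ∀ i, tApp A x i = l * x i ^ (m - 1)

def Eigenvalues (A : Tensor ι m) : Set ℂ := {l | ∃ x, IsEigPair A l x}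

/-- The spectral radius: the largest modulus of an eigenvalue. -/
noncomputable def specRad (A : Tensor ι m) : ℝ := sSup ((fun z : ℂ => ‖z‖) '' Eigenvalues A)

/-- All entries are nonnegative reals. -/
def Nonneg (A : Tensor ι m) : Prop := ∀ i f, ∃ r : ℝ, 0 ≤ r ∧ A i f = (r : ℂ)

/-- Arc `(i,j)` of the directed graph `G(A)`. -/
def Arc (A : Tensor ι m) (i j : ι) : Prop := ∃ f, A i f ≠ 0 ∧ ∃ k, f k = j

/-- `G(A)` is strongly connected. -/
def WeaklyIrreducible (A : Tensor ι m) : Prop :=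
  ∀ i j : ι, Relation.ReflTransGen (Arc A) i j

/-- The projective eigenvariety `PV_l(A) ⊆ ℙ^{n-1}`. -/
def PV (A : Tensor ι m) (l : ℂ) : Set (Projectivization ℂ (ι → ℂ)) :=
  {p | ∃ (v : ι → ℂ) (hv : v ≠ 0), Projectivization.mk ℂ v hv = p ∧
        ∀ i, tApp A v i = l * v i ^ (m - 1)}

/-- `(D^{-(m-1)} A D)_{i₁…i_m} = d_{i₁}^{-(m-1)} a_{i₁…i_m} d_{i₂} ⋯ d_{i_m}`. -/
noncomputable def diagConj (d : ι → ℂ) (A : Tensor ι m) : Tensor ι m :=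
  fun i f => (d i)⁻¹ ^ (m - 1) * A i f * ∏ j, d (f j)

/-- Combinatorial symmetry: the support is invariant under permutations of indices. -/
def CombSymm (A : Tensor ι m) : Prop :=
  ∀ i f i' f', (i ::ₘ Multiset.map f Finset.univ.val) = (i' ::ₘ Multiset.map f' Finset.univ.val) →
    (A i f ≠ 0 ↔ A i' f' ≠ 0)

/-- Irreducibility of a tensor. -/
def Irred (A : Tensor ι m) : Prop :=
  ¬ ∃ S : Set ι, S.Nonempty ∧ S ≠ Set.univ ∧
      ∀ i ∈ S, ∀ f : Fin (m - 1) → ι, (∀ j, f j ∉ S) → A i f = 0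

/-- Solid arc: `(i,j)` arising from a nonzero entry `a_{ij…j}`. -/
def SolidArc (A : Tensor ι m) (i j : ι) : Prop := A i (fun _ => j) ≠ 0

/-- Spectral `ℓ`-symmetry: `Spec(A) = e^{2πi/ℓ} Spec(A)`. -/
def SpectralSymm (A : Tensor ι m) (ℓ : ℕ) : Prop :=
  Eigenvalues A = (fun z => Complex.exp ((2 * Real.pi / ℓ : ℝ) * Complex.I) * z) '' Eigenvalues A

/-- The set `𝔇^{(j)}(A)` (for the given `ℓ`), as diagonal matrices recorded by their diagonals. -/
def Dgj {n m : ℕ} [NeZero n] (A : Tensor (Fin n) m) (ℓ j : ℕ) : Set (Fin n → ℂ) :=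
  {d | (∀ i, d i ≠ 0) ∧ d 0 = 1 ∧
    ∀ i f, A i f = Complex.exp (-(2 * Real.pi * j / ℓ : ℝ) * Complex.I) * diagConj d A i f}

/-- The group `𝔇(A) = ⋃_{j=0}^{ℓ-1} 𝔇^{(j)}(A)`. -/
def DgAll {n m : ℕ} [NeZero n] (A : Tensor (Fin n) m) (ℓ : ℕ) : Set (Fin n → ℂ) :=
  {d | ∃ j < ℓ, d ∈ Dgj A ℓ j}

/-- `𝔇^{(0)}(A)`. -/
def Dg0 {n m : ℕ} [NeZero n] (A : Tensor (Fin n) m) : Set (Fin n → ℂ) :=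
  {d | (∀ i, d i ≠ 0) ∧ d 0 = 1 ∧ ∀ i f, A i f = diagConj d A i f}

/-- Restriction (principal subtensor) of `A` to a set `S` of indices. -/
def restrict (A : Tensor ι m) (S : Set ι) : Tensor S m :=
  fun i f => A i.1 (fun j => (f j).1)

attribute [local instance] Classical.propDecidable

/-- The adjacency tensor of an `m`-uniform hypergraph with edge set `E` on `Fin n`. -/
noncomputable def adjT (n m : ℕ) (E : Finset (Finset (Fin n))) : Tensor (Fin n) m :=
  fun i f => if insert i (Finset.image f Finset.univ) ∈ E
    then (1 : ℂ) / (Nat.factorial (m - 1)) else 0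

/-- Connectivity of vertices in a hypergraph. -/
def HConn {n : ℕ} (E : Finset (Finset (Fin n))) : Fin n → Fin n → Prop :=
  Relation.ReflTransGen (fun u w => ∃ e ∈ E, u ∈ e ∧ w ∈ e)

-- Close the scope opened above, so that its `variable`s and its local instance
-- `Classical.propDecidable` do not reach the general lemmas below.
end PaperTensor

namespace PaperTensor

open Finset

theorem _root_.Relation.ReflTransGen.of_forall_imp {α : Type} {r : α → α → Prop}
    {p : α → Prop} {a b : α} (h : Relation.ReflTransGen r a b)
    (hstep : ∀ c d, r c d → p c → p d) (ha : p a) : p b := by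
  induction h with
  | refl => exact ha
  | tail _ hcd ih => exact hstep _ _ hcd ih

theorem _root_.Relation.ReflTransGen.exists_rel_of_not {α : Type} {r : α → α → Prop}
    {p : α → Prop} {a b : α} (h : Relation.ReflTransGen r a b) (ha : p a) (hb : ¬ p b) :
    ∃ c d, r c d ∧ p c ∧ ¬ p d := by
  by_contra! hne
  exact hb (h.of_forall_imp (fun c d hcd hc => hne c d hcd hc) ha)

lemma exists_mul_pow_lt_mul_pow {k m : ℕ} (hkm : k < m) (a : ℝ) {b : ℝ} (hb : 0 < b) :
    ∃ ε > 0, a * ε ^ m < b * ε ^ k := by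
  have hcont : Continuous fun ε : ℝ => a * ε ^ (m - k) := by fun_prop
  have hlim := (hcont.tendsto 0).mono_left (nhdsWithin_le_nhds (s := Set.Ioi 0))
  rw [zero_pow (Nat.sub_ne_zero_of_lt hkm), mul_zero] at hlim
  obtain ⟨ε, hε, hεpos⟩ := ((hlim.eventually (gt_mem_nhds hb)).and self_mem_nhdsWithin).exists
  refine ⟨ε, hεpos, ?_⟩
  calc a * ε ^ m = a * ε ^ (m - k) * ε ^ k := by
        rw [mul_assoc, ← pow_add, Nat.sub_add_cancel hkm.le]
    _ < b * ε ^ k := mul_lt_mul_of_pos_right hε (pow_pos hεpos k)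

lemma eq_of_prod_eq_prod_of_le {α : Type} {s : Finset α} {a b : α → ℝ} (ha : ∀ v ∈ s, 0 ≤ a v)
    (hab : ∀ v ∈ s, a v ≤ b v) (hb : ∀ v ∈ s, 0 < b v) (h : ∏ v ∈ s, a v = ∏ v ∈ s, b v)
    {v : α} (hv : v ∈ s) : a v = b v := by
  classical
  have hP : 0 < ∏ w ∈ s.erase v, b w := prod_pos fun w hw => hb w (mem_of_mem_erase hw)
  refine le_antisymm (hab v hv) (le_of_mul_le_mul_right ?_ hP)
  calc b v * ∏ w ∈ s.erase v, b w = ∏ w ∈ s, a w := by rw [mul_prod_erase _ _ hv, h]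
    _ = a v * ∏ w ∈ s.erase v, a w := (mul_prod_erase _ _ hv).symm
    _ ≤ a v * ∏ w ∈ s.erase v, b w := mul_le_mul_of_nonneg_left
        (prod_le_prod (fun w hw => ha w (mem_of_mem_erase hw))
          fun w hw => hab w (mem_of_mem_erase hw)) (ha v hv)

/-- Strict convexity of the closed unit disc of `ℂ`. -/
lemma eq_of_sum_mul_eq_sum_mul {α : Type} {s : Finset α} {w : α → ℝ} {a : α → ℂ} {b : ℂ}
    (hw : ∀ e ∈ s, 0 < w e) (ha : ∀ e ∈ s, ‖a e‖ = 1) (hb : ‖b‖ = 1)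
    (h : ∑ e ∈ s, w e * a e = (∑ e ∈ s, w e) * b) {e : α} (he : e ∈ s) : a e = b := by
  have hb0 : b ≠ 0 := norm_ne_zero_iff.1 (hb ▸ one_ne_zero)
  have hre : ∑ e ∈ s, w e * (a e / b).re = ∑ e ∈ s, w e := by
    have := congrArg (fun z : ℂ => (z / b).re) h
    simp only [sum_div, mul_div_assoc, mul_div_cancel_right₀ _ hb0, Complex.re_sum,
      Complex.re_ofReal_mul, Complex.ofReal_re] at this
    exact this
  have hle : ∀ e ∈ s, w e * (a e / b).re ≤ w e := fun e he' => mul_le_of_le_one_right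
    (hw e he').le ((Complex.re_le_norm _).trans (by rw [norm_div, ha e he', hb, div_one]))
  have h1 : (a e / b).re = 1 := by
    have := (sum_eq_sum_iff_of_le hle).1 hre e he
    exact (mul_eq_left₀ (hw e he).ne').1 this
  have h2 : (a e / b).im = 0 :=
    Complex.abs_re_eq_norm.1 (by rw [h1, abs_one, norm_div, ha e he, hb, div_one])
  rw [← div_eq_one_iff_eq hb0]
  exact Complex.ext h1 h2

lemma finite_setOf_forall_pow_eq_one {α : Type} [Finite α] {m : ℕ} (hm : m ≠ 0) :
    {ω : α → ℂ | ∀ v, ω v ^ m = 1}.Finite :=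
  Set.Finite.pi' fun _ => (Polynomial.nthRoots m (1 : ℂ)).toFinset.finite_toSet.subset
    fun c (hc : c ^ m = 1) => by simp [Polynomial.mem_nthRoots (Nat.pos_of_ne_zero hm), hc]

section EdgeSums

variable {ι : Type} {m : ℕ} {ℰ : Finset (Finset ι)}

def Linked (ℰ : Finset (Finset ι)) (a b : ι) : Prop := ∃ e ∈ ℰ, a ∈ e ∧ b ∈ e

def edgePoly (ℰ : Finset (Finset ι)) (x : ι → ℝ) : ℝ := ∑ e ∈ ℰ, ∏ v ∈ e, x v

lemma edgePoly_const_mul (hunif : ∀ e ∈ ℰ, e.card = m) (c : ℝ) (x : ι → ℝ) :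
    edgePoly ℰ (fun v => c * x v) = c ^ m * edgePoly ℰ x := by
  rw [edgePoly, edgePoly, mul_sum]
  exact sum_congr rfl fun e he => by rw [prod_mul_distrib, prod_const, hunif e he]

variable [DecidableEq ι]

/-- `(A(ℰ) x^{m-1})_i` written as a sum over the edges through `i`. -/
def edgeApp {R : Type} [CommSemiring R] (ℰ : Finset (Finset ι)) (x : ι → R) (i : ι) : R :=
  ∑ e ∈ ℰ with i ∈ e, ∏ v ∈ e.erase i, x v

def EigenEq {R : Type} [CommSemiring R] (m : ℕ) (ℰ : Finset (Finset ι)) (μ : R) (x : ι → R) :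
    Prop :=
  ∀ i, edgeApp ℰ x i = μ * x i ^ (m - 1)

lemma edgeApp_const_mul {R : Type} [CommSemiring R] (hunif : ∀ e ∈ ℰ, e.card = m) (c : R)
    (x : ι → R) (i : ι) : edgeApp ℰ (fun v => c * x v) i = c ^ (m - 1) * edgeApp ℰ x i := by
  rw [edgeApp, edgeApp, mul_sum]
  refine sum_congr rfl fun e he => ?_
  rw [mem_filter] at he
  rw [prod_mul_distrib, prod_const, card_erase_of_mem he.2, hunif e he.1]

lemma edgeApp_mono {x y : ι → ℝ} (hx : ∀ v, 0 ≤ x v) (hxy : ∀ v, x v ≤ y v) (i : ι) :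
    edgeApp ℰ x i ≤ edgeApp ℰ y i :=
  sum_le_sum fun _ _ => prod_le_prod (fun v _ => hx v) (fun v _ => hxy v)

lemma norm_edgeApp_le (x : ι → ℂ) (i : ι) : ‖edgeApp ℰ x i‖ ≤ edgeApp ℰ (‖x ·‖) i :=
  (norm_sum_le _ _).trans_eq (sum_congr rfl fun _ _ => norm_prod _ _)

lemma edgeApp_ofReal (x : ι → ℝ) (i : ι) :
    edgeApp ℰ (fun v => (x v : ℂ)) i = edgeApp ℰ x i := by
  simp [edgeApp]

lemma edgePoly_update (x : ι → ℝ) (i : ι) (a : ℝ) :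
    edgePoly ℰ (Function.update x i a) =
      a * edgeApp ℰ x i + ∑ e ∈ ℰ with i ∉ e, ∏ v ∈ e, x v := by
  rw [edgePoly, ← sum_filter_add_sum_filter_not ℰ (i ∈ ·), edgeApp, mul_sum]
  congr 1
  · exact sum_congr rfl fun e he => by
      rw [prod_update_of_mem (mem_filter.1 he).2, sdiff_singleton_eq_erase]
  · exact sum_congr rfl fun e he => prod_update_of_notMem (mem_filter.1 he).2 _ _

lemma edgePoly_sub_prod_add_prod_le {z y : ι → ℝ} (hz : ∀ v, 0 ≤ z v) (hzy : ∀ v, z v ≤ y v)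
    {e : Finset ι} (he : e ∈ ℰ) :
    edgePoly ℰ z - ∏ v ∈ e, z v + ∏ v ∈ e, y v ≤ edgePoly ℰ y := by
  rw [edgePoly, edgePoly, ← add_sum_erase _ _ he, ← add_sum_erase _ _ he]
  have := sum_le_sum (s := ℰ.erase e) (f := fun e' => ∏ v ∈ e', z v)
    (g := fun e' => ∏ v ∈ e', y v) fun e' _ =>
    prod_le_prod (fun v _ => hz v) (fun v _ => hzy v)
  linarith

lemma EigenEq.ofReal {lam : ℝ} {z : ι → ℝ} (h : EigenEq m ℰ lam z) :
    EigenEq m ℰ (lam : ℂ) (fun v => (z v : ℂ)) := fun i => by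
  rw [edgeApp_ofReal, h i]
  push_cast
  rfl

lemma EigenEq.const_mul {R : Type} [CommSemiring R] (hunif : ∀ e ∈ ℰ, e.card = m) {μ : R}
    {x : ι → R} (h : EigenEq m ℰ μ x) (c : R) : EigenEq m ℰ μ (fun v => c * x v) := fun i => by
  rw [edgeApp_const_mul hunif, h i]
  ring

end EdgeSums

section AdjacencyTensor

variable {ι : Type} [DecidableEq ι] {m : ℕ}

def IsAdjTensor (m : ℕ) (B : Tensor ι m) (ℰ : Finset (Finset ι)) : Prop :=
  ∀ i f, B i f = if insert i (image f univ) ∈ ℰ then (1 : ℂ) / (m - 1).factorial else 0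

lemma adjT_isAdjTensor (n m : ℕ) (E : Finset (Finset (Fin n))) :
    IsAdjTensor m (adjT n m E) E := by
  intro i f
  unfold adjT
  congr!

lemma injective_of_image_eq {k : ℕ} {f : Fin k → ι} {s : Finset ι} (hf : image f univ = s)
    (hs : s.card = k) : Function.Injective f := by
  have : (univ.image f).card = (univ : Finset (Fin k)).card := by rw [hf, hs, card_fin]
  exact fun a b hab => card_image_iff.1 this (mem_univ a) (mem_univ b) hab

lemma insert_image_eq_iff {f : Fin (m - 1) → ι} {i : ι} {e : Finset ι} (hi : i ∈ e)
    (he : e.card = m) : insert i (image f univ) = e ↔ image f univ = e.erase i := by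
  refine ⟨fun h => ?_, fun h => by rw [h, insert_erase hi]⟩
  have hif : i ∉ image f univ := by
    intro hif
    have := card_image_le (s := (univ : Finset (Fin (m - 1)))) (f := f)
    rw [← insert_eq_of_mem hif, h, he, card_univ, Fintype.card_fin] at this
    have : 0 < m := he ▸ card_pos.2 ⟨i, hi⟩
    omega
  rw [← h, erase_insert hif]

lemma prod_comp_eq_prod_of_image_eq {k : ℕ} {f : Fin k → ι} {s : Finset ι}
    (hf : image f univ = s) (hs : s.card = k) (x : ι → ℂ) :
    ∏ j, x (f j) = ∏ v ∈ s, x v := by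
  rw [← hf, prod_image fun a _ b _ h => injective_of_image_eq hf hs h]

variable [Fintype ι]

lemma card_filter_image_eq {k : ℕ} {s : Finset ι} (hs : s.card = k) :
    #{f : Fin k → ι | image f univ = s} = k.factorial := by
  rw [← Nat.descFactorial_self]
  calc #{f : Fin k → ι | image f univ = s} = #(univ : Finset (Fin k ↪ s)) := by
        refine (card_bij (fun g _ => fun j => (g j : ι)) (fun g _ => ?_)
          (fun g₁ _ g₂ _ h => Function.Embedding.ext fun j => Subtype.ext (congrFun h j))
          (fun f hf => ?_)).symm
        · refine mem_filter.2 ⟨mem_univ _, eq_of_subset_of_card_le ?_ ?_⟩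
          · exact image_subset_iff.2 fun j _ => (g j).2
          · rw [card_image_of_injective (f := fun j => (g j : ι)) _
              (Subtype.val_injective.comp g.injective)]
            simp [hs]
        · have hf := (mem_filter.1 hf).2
          exact ⟨⟨fun j => ⟨f j, hf ▸ mem_image_of_mem f (mem_univ j)⟩, fun a b hab =>
            injective_of_image_eq hf hs (congrArg Subtype.val hab)⟩, mem_univ _, rfl⟩
    _ = k.descFactorial k := by
        rw [card_univ, Fintype.card_embedding_eq, Fintype.card_coe, Fintype.card_fin, hs]

theorem tApp_eq_edgeApp {B : Tensor ι m} {ℰ : Finset (Finset ι)} (hB : IsAdjTensor m B ℰ)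
    (hunif : ∀ e ∈ ℰ, e.card = m) (x : ι → ℂ) (i : ι) : tApp B x i = edgeApp ℰ x i := by
  have hc : ((m - 1).factorial : ℂ) ≠ 0 := by exact_mod_cast (m - 1).factorial_ne_zero
  calc tApp B x i
      = ∑ f : Fin (m - 1) → ι with insert i (image f univ) ∈ ℰ,
          ((m - 1).factorial : ℂ)⁻¹ * ∏ j, x (f j) := by
        rw [tApp, sum_filter]
        exact sum_congr rfl fun f _ => by rw [hB]; split_ifs <;> simp
    _ = ∑ e ∈ ℰ with i ∈ e, ∑ f : Fin (m - 1) → ι with image f univ = e.erase i,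
          ((m - 1).factorial : ℂ)⁻¹ * ∏ v ∈ e.erase i, x v := by
        rw [← sum_fiberwise_of_maps_to (g := fun f => insert i (image f univ))
          (t := {e ∈ ℰ | i ∈ e})
          fun f hf => mem_filter.2 ⟨(mem_filter.1 hf).2, mem_insert_self _ _⟩]
        refine sum_congr rfl fun e he => ?_
        obtain ⟨heℰ, hie⟩ := mem_filter.1 he
        have hcard : (e.erase i).card = m - 1 := by rw [card_erase_of_mem hie, hunif e heℰ]
        rw [filter_filter]
        refine sum_congr (filter_congr fun f _ => ?_) fun f hf => ?_
        · rw [← insert_image_eq_iff hie (hunif e heℰ)]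
          exact ⟨And.right, fun h => ⟨h ▸ heℰ, h⟩⟩
        · rw [prod_comp_eq_prod_of_image_eq (mem_filter.1 hf).2 hcard]
    _ = edgeApp ℰ x i := by
        refine sum_congr rfl fun e he => ?_
        obtain ⟨heℰ, hie⟩ := mem_filter.1 he
        rw [sum_const, card_filter_image_eq (by rw [card_erase_of_mem hie, hunif e heℰ]),
          nsmul_eq_mul, mul_inv_cancel_left₀ hc]

end AdjacencyTensor

section PerronFrobenius

variable {ι : Type} [Fintype ι] {m : ℕ} {ℰ : Finset (Finset ι)}

def nonnegSphere (ι : Type) [Fintype ι] (m : ℕ) : Set (ι → ℝ) :=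
  {x | (∀ v, 0 ≤ x v) ∧ ∑ v, x v ^ m = 1}

lemma isCompact_nonnegSphere (hm : m ≠ 0) : IsCompact (nonnegSphere ι m) := by
  refine Metric.isCompact_of_isClosed_isBounded ?_ ((Metric.isBounded_closedBall (x := 0)
    (r := 1)).subset fun x hx => ?_)
  · have h1 : IsClosed {x : ι → ℝ | ∀ v, 0 ≤ x v} := by
      simp only [Set.ofPred_forall]
      exact isClosed_iInter fun v => isClosed_le continuous_const (continuous_apply v)
    have h2 : IsClosed {x : ι → ℝ | ∑ v, x v ^ m = 1} := isClosed_eq (by fun_prop) continuous_const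
    exact h1.inter h2
  · refine mem_closedBall_zero_iff.2 ((pi_norm_le_iff_of_nonneg zero_le_one).2 fun v => ?_)
    rw [Real.norm_of_nonneg (hx.1 v)]
    refine (pow_le_one_iff_of_nonneg (hx.1 v) hm).1 (hx.2 ▸ ?_)
    exact single_le_sum (fun w _ => pow_nonneg (hx.1 w) m) (mem_univ v)

lemma const_mem_nonnegSphere [Nonempty ι] (hm : m ≠ 0) :
    (fun _ => ((Fintype.card ι : ℝ)⁻¹) ^ (m⁻¹ : ℝ)) ∈ nonnegSphere ι m := by
  refine ⟨fun _ => by positivity, ?_⟩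
  rw [sum_const, Real.rpow_inv_natCast_pow (by positivity) hm, card_univ, nsmul_eq_mul,
    mul_inv_cancel₀ (by simp)]

/-- `z ≥ 0` maximizes the Rayleigh quotient `edgePoly ℰ y / ∑ v, y v ^ m` over `y ≥ 0`, with
maximum `lam`. -/
structure IsRayleighMax (m : ℕ) (ℰ : Finset (Finset ι)) (lam : ℝ) (z : ι → ℝ) : Prop where
  nonneg : ∀ v, 0 ≤ z v
  edgePoly_eq : edgePoly ℰ z = lam * ∑ v, z v ^ m
  edgePoly_le : ∀ y : ι → ℝ, (∀ v, 0 ≤ y v) → edgePoly ℰ y ≤ lam * ∑ v, y v ^ m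

lemma isRayleighMax_of_isMaxOn (hunif : ∀ e ∈ ℰ, e.card = m) (hm : m ≠ 0) {z : ι → ℝ}
    (hzΔ : z ∈ nonnegSphere ι m) (hz : IsMaxOn (edgePoly ℰ) (nonnegSphere ι m) z) :
    IsRayleighMax m ℰ (edgePoly ℰ z) z := by
  refine ⟨hzΔ.1, by rw [hzΔ.2, mul_one], fun y hy => ?_⟩
  set N := ∑ v, y v ^ m
  rcases (sum_nonneg fun v _ => pow_nonneg (hy v) m : 0 ≤ N).eq_or_lt with hN | hN
  · have hy0 : y = fun v => 0 * y v := funext fun v => by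
      rw [zero_mul]
      exact pow_eq_zero_iff hm |>.1 <| (sum_eq_zero_iff_of_nonneg fun w _ =>
        pow_nonneg (hy w) m).1 hN.symm v (mem_univ v)
    rw [show N = 0 from hN.symm, mul_zero, hy0, edgePoly_const_mul hunif, zero_pow hm, zero_mul]
  · set c := N⁻¹ ^ (m⁻¹ : ℝ)
    have hcm : c ^ m = N⁻¹ := Real.rpow_inv_natCast_pow (inv_nonneg.2 hN.le) hm
    have hmem : (fun v => c * y v) ∈ nonnegSphere ι m := by
      refine ⟨fun v => mul_nonneg (by positivity) (hy v), ?_⟩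
      show ∑ v, (c * y v) ^ m = 1
      simp_rw [mul_pow, ← mul_sum, hcm]
      exact inv_mul_cancel₀ hN.ne'
    have := hz hmem
    rw [Set.mem_ofPred_eq, edgePoly_const_mul hunif, hcm] at this
    rwa [inv_mul_le_iff₀ hN, mul_comm] at this

variable [DecidableEq ι]

/-- Raising the zero coordinates of an edge that also has a positive vertex to `ε` gains order
`ε ^ k` in `edgePoly` and costs only order `ε ^ m` in `∑ v, y v ^ m`, where `k < m`. -/
lemma IsRayleighMax.pos (hconn : ∀ a b, Relation.ReflTransGen (Linked ℰ) a b)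
    (hunif : ∀ e ∈ ℰ, e.card = m) (hm : m ≠ 0) {lam : ℝ} {z : ι → ℝ}
    (hz : IsRayleighMax m ℰ lam z) (hpos : 0 < edgePoly ℰ z) (v : ι) : 0 < z v := by
  by_contra hv
  obtain ⟨w, hw⟩ : ∃ w, 0 < z w := by
    by_contra! h
    have : ∑ v, z v ^ m = 0 :=
      sum_eq_zero fun v _ => by rw [le_antisymm (h v) (hz.nonneg v), zero_pow hm]
    have heq := hz.edgePoly_eq
    rw [this, mul_zero] at heq
    exact hpos.ne' heq
  obtain ⟨a, b, ⟨e, he, hae, hbe⟩, ha, hb⟩ := (hconn w v).exists_rel_of_not (p := (0 < z ·)) hw hv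
  set S := e.filter (fun v => z v = 0)
  have hzS : ∀ v ∈ S, z v = 0 := fun v hv => (mem_filter.1 hv).2
  have hbS : b ∈ S := mem_filter.2 ⟨hbe, le_antisymm (not_lt.1 hb) (hz.nonneg b)⟩
  have hkm : S.card < m := hunif e he ▸ card_lt_card
    ⟨filter_subset _ _, fun h => ha.ne' (mem_filter.1 (h hae)).2⟩
  have hc : 0 < ∏ v ∈ e \ S, z v := prod_pos fun v hv =>
    (hz.nonneg v).lt_of_ne fun h => (mem_sdiff.1 hv).2 (mem_filter.2 ⟨(mem_sdiff.1 hv).1, h.symm⟩)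
  obtain ⟨ε, hε, hlt⟩ := exists_mul_pow_lt_mul_pow hkm (lam * S.card) hc
  set y : ι → ℝ := fun v => if v ∈ S then ε else z v
  have hzy : ∀ v, z v ≤ y v := fun v => by
    by_cases hv : v ∈ S <;> simp [y, hv, hzS, hε.le]
  have hprod : ∏ v ∈ e, y v = ε ^ S.card * ∏ v ∈ e \ S, z v := by
    rw [← prod_sdiff (filter_subset _ e : S ⊆ e), mul_comm,
      prod_congr rfl (fun v hv => if_pos hv : ∀ v ∈ S, y v = ε), prod_const,
      prod_congr rfl (fun v hv => if_neg (mem_sdiff.1 hv).2 : ∀ v ∈ e \ S, y v = z v)]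
  have hsum : ∑ v, y v ^ m = ∑ v, z v ^ m + S.card * ε ^ m := by
    have hpow : ∀ v, y v ^ m = z v ^ m + if v ∈ S then ε ^ m else 0 := fun v => by
      by_cases hv : v ∈ S <;> simp [y, hv, hzS, zero_pow hm]
    simp only [hpow, sum_add_distrib, sum_ite_mem, univ_inter, sum_const, nsmul_eq_mul]
  have hgain := edgePoly_sub_prod_add_prod_le hz.nonneg hzy he
  rw [prod_eq_zero hbe (hzS b hbS), hprod, hz.edgePoly_eq] at hgain
  have hcost := hz.edgePoly_le y fun v => (hz.nonneg v).trans (hzy v)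
  rw [hsum] at hcost
  nlinarith

lemma sum_update_pow (z : ι → ℝ) (i : ι) (a : ℝ) :
    ∑ v, Function.update z i a v ^ m = a ^ m + ∑ v ∈ univ.erase i, z v ^ m := by
  rw [← add_sum_erase _ _ (mem_univ i), Function.update_self]
  exact congrArg _ (sum_congr rfl fun v hv => by rw [Function.update_of_ne (ne_of_mem_erase hv)])

/-- Lagrange condition: `a ↦ edgePoly ℰ (update z i a) - lam * ∑ v, update z i a v ^ m` has a
local maximum at the interior point `z i`. -/
lemma IsRayleighMax.edgeApp_eq {lam : ℝ} {z : ι → ℝ} (hz : IsRayleighMax m ℰ lam z) {i : ι}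
    (hi : 0 < z i) : edgeApp ℰ z i = m * lam * z i ^ (m - 1) := by
  set g : ℝ → ℝ := fun a => edgePoly ℰ (Function.update z i a) -
    lam * ∑ v, Function.update z i a v ^ m
  have hg : g = fun a => a * edgeApp ℰ z i + ∑ e ∈ ℰ with i ∉ e, ∏ v ∈ e, z v -
      lam * (a ^ m + ∑ v ∈ univ.erase i, z v ^ m) := by
    funext a
    simp only [g, edgePoly_update, sum_update_pow]
  have hmaxg : IsLocalMax g (z i) := by
    filter_upwards [Ioi_mem_nhds hi] with a ha
    have hupd : ∀ v, 0 ≤ Function.update z i a v := fun v => by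
      rcases eq_or_ne v i with rfl | hv
      · simpa using ha.le
      · simpa [hv] using hz.nonneg v
    simp only [g, Function.update_eq_self, hz.edgePoly_eq, sub_self]
    linarith [hz.edgePoly_le _ hupd]
  have hderiv : HasDerivAt g (edgeApp ℰ z i - lam * (m * z i ^ (m - 1))) (z i) := by
    rw [hg]
    refine ((((hasDerivAt_id' (z i)).mul_const _).add_const _).sub
      (((hasDerivAt_pow m (z i)).add_const _).const_mul lam)).congr_deriv ?_
    ring
  have := hmaxg.hasDerivAt_eq_zero hderiv
  linarith

theorem exists_pos_eigenEq (hconn : ∀ a b, Relation.ReflTransGen (Linked ℰ) a b)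
    (hunif : ∀ e ∈ ℰ, e.card = m) (hm : m ≠ 0) (hne : ℰ.Nonempty) :
    ∃ lam : ℝ, 0 < lam ∧ ∃ z : ι → ℝ, (∀ v, 0 < z v) ∧ EigenEq m ℰ lam z := by
  obtain ⟨e, he⟩ := hne
  obtain ⟨a, -⟩ : e.Nonempty := card_pos.1 (by rw [hunif e he]; omega)
  have : Nonempty ι := ⟨a⟩
  have hcont : Continuous (edgePoly ℰ) := by unfold edgePoly; fun_prop
  obtain ⟨z, hzΔ, hzmax⟩ := (isCompact_nonnegSphere hm).exists_isMaxOn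
    ⟨_, const_mem_nonnegSphere hm⟩ hcont.continuousOn
  have hz := isRayleighMax_of_isMaxOn hunif hm hzΔ hzmax
  have hpos : 0 < edgePoly ℰ z := (sum_pos (fun e _ => prod_pos fun v _ => by positivity)
    ⟨e, he⟩).trans_le (hzmax (const_mem_nonnegSphere hm))
  have hzpos := hz.pos hconn hunif hm hpos
  exact ⟨m * edgePoly ℰ z, by positivity, z, hzpos, fun i => hz.edgeApp_eq (hzpos i)⟩

end PerronFrobenius

section CollatzWielandt

variable {ι : Type} {m : ℕ} {ℰ : Finset (Finset ι)}

/-- The eigen-equations at `a` squeeze `edgeApp ℰ ‖x‖ a` between `edgeApp ℰ y a` and itself, so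
`‖x‖ = y` on every edge through `a`. -/
lemma norm_eq_of_linked [DecidableEq ι] {lam : ℝ} {y : ι → ℝ}
    (hy : ∀ v, 0 < y v) (hyeig : EigenEq m ℰ lam y) {x : ι → ℂ}
    (hxeig : EigenEq m ℰ (lam : ℂ) x) (hle : ∀ v, ‖x v‖ ≤ y v) {a b : ι} (hab : Linked ℰ a b)
    (ha : ‖x a‖ = y a) : ‖x b‖ = y b := by
  obtain ⟨e, he, hae, hbe⟩ := hab
  rcases eq_or_ne b a with rfl | hba
  · exact ha
  have hsum : edgeApp ℰ (‖x ·‖) a = edgeApp ℰ y a := by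
    refine le_antisymm (edgeApp_mono (fun v => norm_nonneg _) hle a) ?_
    calc edgeApp ℰ y a = lam * ‖x a‖ ^ (m - 1) := by rw [hyeig a, ha]
      _ ≤ ‖(lam : ℂ)‖ * ‖x a‖ ^ (m - 1) := by
          gcongr
          rw [Complex.norm_real, Real.norm_eq_abs]
          exact le_abs_self lam
      _ = ‖edgeApp ℰ x a‖ := by rw [hxeig a, norm_mul, norm_pow]
      _ ≤ edgeApp ℰ (‖x ·‖) a := norm_edgeApp_le x a
  have hprod := (sum_eq_sum_iff_of_le fun e _ => prod_le_prod (fun v _ => norm_nonneg (x v))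
    fun v _ => hle v).1 hsum e (mem_filter.2 ⟨he, hae⟩)
  exact eq_of_prod_eq_prod_of_le (fun v _ => norm_nonneg _) (fun v _ => hle v)
    (fun v _ => hy v) hprod (mem_erase.2 ⟨hba, hbe⟩)

/-- With `‖u‖ = 1`, the eigen-equation of `y • u` at `i` writes `u i ^ (m - 1)` as a positive
combination of the unit numbers `∏ v ∈ e.erase i, u v`, which must then all equal it. -/
lemma prod_eq_pow_of_eigenEq [DecidableEq ι] (hm : m ≠ 0) {lam : ℝ}
    {y : ι → ℝ} (hy : ∀ v, 0 < y v) (hyeig : EigenEq m ℰ lam y) {u : ι → ℂ}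
    (hu : ∀ v, ‖u v‖ = 1) (hxeig : EigenEq m ℰ (lam : ℂ) (fun v => y v * u v)) {e : Finset ι}
    (he : e ∈ ℰ) {i : ι} (hi : i ∈ e) : ∏ v ∈ e, u v = u i ^ m := by
  have hsum : ∑ e ∈ ℰ with i ∈ e, (∏ v ∈ e.erase i, y v : ℝ) * ∏ v ∈ e.erase i, u v =
      (∑ e ∈ ℰ with i ∈ e, (∏ v ∈ e.erase i, y v : ℝ)) * u i ^ (m - 1) := by
    have hx := hxeig i
    have hy := hyeig i
    simp only [edgeApp, prod_mul_distrib] at hx hy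
    rw [hy]
    push_cast
    rw [hx]
    ring
  rw [← mul_prod_erase e u hi, eq_of_sum_mul_eq_sum_mul (fun e _ => prod_pos fun v _ => hy v)
    (fun e _ => by simp [norm_prod, hu]) (by simp [hu]) hsum (mem_filter.2 ⟨he, hi⟩),
    mul_pow_sub_one hm]

variable [Fintype ι]

lemma exists_le_mul_eq_mul [Nonempty ι] (a : ι → ℝ) {z : ι → ℝ} (hz : ∀ v, 0 < z v) :
    ∃ t : ℝ, (∀ v, a v ≤ t * z v) ∧ ∃ i, a i = t * z i := by
  obtain ⟨i, -, hi⟩ := exists_max_image univ (fun v => a v / z v) univ_nonempty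
  exact ⟨a i / z i, fun v => (div_le_iff₀ (hz v)).1 (hi v (mem_univ v)), i,
    (div_mul_cancel₀ _ (hz i).ne').symm⟩

lemma exists_norm_le_mul_eq_mul {x : ι → ℂ} (hx : x ≠ 0) {z : ι → ℝ} (hz : ∀ v, 0 < z v) :
    ∃ t : ℝ, 0 < t ∧ (∀ v, ‖x v‖ ≤ t * z v) ∧ ∃ i, ‖x i‖ = t * z i := by
  obtain ⟨v, hv⟩ := Function.ne_iff.1 hx
  have : Nonempty ι := ⟨v⟩
  obtain ⟨t, hle, hi⟩ := exists_le_mul_eq_mul (‖x ·‖) hz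
  exact ⟨t, pos_of_mul_pos_left ((norm_pos_iff.2 hv).trans_le (hle v)) (hz v).le, hle, hi⟩

variable [DecidableEq ι]

/-- Collatz–Wielandt: compare `‖x‖` with the least multiple `t • z` dominating it, at a vertex
where the two touch. -/
theorem norm_le_of_eigenEq (hunif : ∀ e ∈ ℰ, e.card = m) {lam : ℝ} {z : ι → ℝ}
    (hz : ∀ v, 0 < z v) (hzeig : EigenEq m ℰ lam z) {μ : ℂ} {x : ι → ℂ} (hx : x ≠ 0)
    (hxeig : EigenEq m ℰ μ x) : ‖μ‖ ≤ lam := by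
  obtain ⟨t, ht, hle, i, hi⟩ := exists_norm_le_mul_eq_mul hx hz
  refine le_of_mul_le_mul_right ?_ (pow_pos (mul_pos ht (hz i)) (m - 1))
  calc ‖μ‖ * (t * z i) ^ (m - 1) = ‖edgeApp ℰ x i‖ := by rw [hxeig i, norm_mul, norm_pow, hi]
    _ ≤ edgeApp ℰ (‖x ·‖) i := norm_edgeApp_le x i
    _ ≤ edgeApp ℰ (fun v => t * z v) i := edgeApp_mono (fun v => norm_nonneg _) hle i
    _ = lam * (t * z i) ^ (m - 1) := by rw [edgeApp_const_mul hunif, hzeig i]; ring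

theorem exists_norm_eq_mul_of_eigenEq (hconn : ∀ a b, Relation.ReflTransGen (Linked ℰ) a b)
    (hunif : ∀ e ∈ ℰ, e.card = m) {lam : ℝ} {z : ι → ℝ} (hz : ∀ v, 0 < z v)
    (hzeig : EigenEq m ℰ lam z) {x : ι → ℂ} (hx : x ≠ 0) (hxeig : EigenEq m ℰ (lam : ℂ) x) :
    ∃ t : ℝ, 0 < t ∧ ∀ v, ‖x v‖ = t * z v := by
  obtain ⟨t, ht, hle, i, hi⟩ := exists_norm_le_mul_eq_mul hx hz
  have htz := hzeig.const_mul hunif t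
  exact ⟨t, ht, fun v => (hconn i v).of_forall_imp (fun a b hab ha =>
    norm_eq_of_linked (fun v => mul_pos ht (hz v)) htz hxeig hle hab ha) hi⟩

theorem exists_eq_mul_root_of_eigenEq (hconn : ∀ a b, Relation.ReflTransGen (Linked ℰ) a b)
    (hunif : ∀ e ∈ ℰ, e.card = m) (hm : m ≠ 0) {lam : ℝ} {z : ι → ℝ} (hz : ∀ v, 0 < z v)
    (hzeig : EigenEq m ℰ lam z) {x : ι → ℂ} (hx : x ≠ 0) (hxeig : EigenEq m ℰ (lam : ℂ) x) :
    ∃ c : ℂ, c ≠ 0 ∧ ∃ ω : ι → ℂ, (∀ v, ω v ^ m = 1) ∧ ∀ v, x v = c * z v * ω v := by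
  obtain ⟨t, ht, habs⟩ := exists_norm_eq_mul_of_eigenEq hconn hunif hz hzeig hx hxeig
  have hy : ∀ v, 0 < t * z v := fun v => mul_pos ht (hz v)
  set u : ι → ℂ := fun v => x v / (t * z v : ℝ)
  have hxu : ∀ v, x v = (t * z v : ℝ) * u v := fun v =>
    (mul_div_cancel₀ _ (Complex.ofReal_ne_zero.2 (hy v).ne')).symm
  have hu : ∀ v, ‖u v‖ = 1 := fun v => by
    rw [norm_div, habs, Complex.norm_real, Real.norm_of_nonneg (hy v).le, div_self (hy v).ne']
  have hyeig := hzeig.const_mul hunif t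
  have hxeig' : EigenEq m ℰ (lam : ℂ) (fun v => (t * z v : ℝ) * u v) := by
    simpa only [← hxu] using hxeig
  obtain ⟨i, -⟩ := Function.ne_iff.1 hx
  have hroot : ∀ v, u v ^ m = u i ^ m := fun v =>
    (hconn i v).of_forall_imp (p := (u · ^ m = u i ^ m)) (fun a b ⟨e, he, hae, hbe⟩ ha => by
      rw [← prod_eq_pow_of_eigenEq hm hy hyeig hu hxeig' he hbe,
        prod_eq_pow_of_eigenEq hm hy hyeig hu hxeig' he hae, ha]) rfl
  have hui : u i ≠ 0 := norm_ne_zero_iff.1 (by rw [hu]; exact one_ne_zero)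
  refine ⟨t * u i, mul_ne_zero (Complex.ofReal_ne_zero.2 ht.ne') hui, fun v => u v / u i,
    fun v => by rw [div_pow, hroot, div_self (pow_ne_zero _ hui)], fun v => ?_⟩
  rw [hxu v]
  push_cast
  field_simp

end CollatzWielandt

section Components

variable {ι : Type} {m : ℕ} {ℰ : Finset (Finset ι)}

lemma Linked.symm {a b : ι} (h : Linked ℰ a b) : Linked ℰ b a :=
  let ⟨e, he, ha, hb⟩ := h; ⟨e, he, hb, ha⟩

lemma reflTransGen_linked_symm {a b : ι} (h : Relation.ReflTransGen (Linked ℰ) a b) :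
    Relation.ReflTransGen (Linked ℰ) b a :=
  Relation.ReflTransGen.mono (fun _ _ => Linked.symm) _ _ (Relation.reflTransGen_swap.2 h)

def component (ℰ : Finset (Finset ι)) (a : ι) : Set ι := {u | Relation.ReflTransGen (Linked ℰ) a u}

/-- The edges of `ℰ` inside the component of `a`, as a hypergraph on that component. -/
noncomputable def componentEdges (ℰ : Finset (Finset ι)) (a : ι) :
    Finset (Finset (component ℰ a)) :=
  ℰ.preimage (Finset.map (Function.Embedding.subtype _)) (map_injective _).injOn

lemma mem_componentEdges {a : ι} {e : Finset (component ℰ a)} :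
    e ∈ componentEdges ℰ a ↔ e.map (Function.Embedding.subtype _) ∈ ℰ :=
  mem_preimage

lemma mem_component_of_mem_edge {a u v : ι} (hu : u ∈ component ℰ a) {e : Finset ι} (he : e ∈ ℰ)
    (hue : u ∈ e) (hve : v ∈ e) : v ∈ component ℰ a :=
  Relation.ReflTransGen.tail hu ⟨e, he, hue, hve⟩

lemma exists_mem_componentEdges {a u : ι} (hu : u ∈ component ℰ a) {e : Finset ι} (he : e ∈ ℰ)
    (hue : u ∈ e) : ∃ e' ∈ componentEdges ℰ a, e'.map (Function.Embedding.subtype _) = e := by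
  classical
  have hsub := subtype_map_of_mem fun v hv => mem_component_of_mem_edge hu he hue hv
  refine ⟨_, mem_componentEdges.2 ?_, hsub⟩
  rwa [hsub]

lemma card_of_mem_componentEdges (hunif : ∀ e ∈ ℰ, e.card = m) {a : ι}
    {e : Finset (component ℰ a)} (he : e ∈ componentEdges ℰ a) : e.card = m := by
  rw [← card_map (Function.Embedding.subtype _), hunif _ (mem_componentEdges.1 he)]

lemma componentEdges_nonempty {a : ι} (ha : ∃ a', a' ≠ a ∧ Relation.ReflTransGen (Linked ℰ) a a') :
    (componentEdges ℰ a).Nonempty := by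
  obtain ⟨a', ha', haa'⟩ := ha
  obtain h | ⟨c, ⟨e, he, hae, -⟩, -⟩ := haa'.cases_head
  · exact absurd h.symm ha'
  · obtain ⟨e', he', -⟩ := exists_mem_componentEdges Relation.ReflTransGen.refl he hae
    exact ⟨e', he'⟩

lemma reflTransGen_componentEdges (a : ι) (u v : component ℰ a) :
    Relation.ReflTransGen (Linked (componentEdges ℰ a)) u v := by
  have key : ∀ b (hb : b ∈ component ℰ a),
      Relation.ReflTransGen (Linked (componentEdges ℰ a)) ⟨a, .refl⟩ ⟨b, hb⟩ := by
    intro b hb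
    induction hb with
    | refl => exact .refl
    | @tail c d hc hcd ih =>
      obtain ⟨e, he, hce, hde⟩ := hcd
      obtain ⟨e', he', rfl⟩ := exists_mem_componentEdges hc he hce
      obtain ⟨c', hc', rfl⟩ := mem_map.1 hce
      obtain ⟨d', hd', rfl⟩ := mem_map.1 hde
      exact ih.tail ⟨e', he', hc', hd'⟩
  exact (reflTransGen_linked_symm (key u u.2)).trans (key v v.2)

noncomputable def extendComponent {R : Type} [Zero R] (a : ι) (x : component ℰ a → R) : ι → R :=
  Function.extend Subtype.val x 0

lemma extendComponent_of_mem {R : Type} [Zero R] {a : ι} (x : component ℰ a → R)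
    (v : component ℰ a) : extendComponent a x v = x v :=
  Subtype.val_injective.extend_apply _ _ _

lemma extendComponent_of_notMem {R : Type} [Zero R] {a : ι} (x : component ℰ a → R) {v : ι}
    (hv : v ∉ component ℰ a) : extendComponent a x v = 0 :=
  Function.extend_apply' _ _ _ fun ⟨w, hw⟩ => hv (hw ▸ w.2)

lemma extendComponent_ne_zero {R : Type} [Zero R] {a : ι}
    {x : component ℰ a → R} (hx : x ≠ 0) : extendComponent a x ≠ 0 := by
  obtain ⟨v, hv⟩ := Function.ne_iff.1 hx
  exact Function.ne_iff.2 ⟨v, by rwa [extendComponent_of_mem]⟩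

end Components

section ComponentEigenvectors

variable {ι : Type} [DecidableEq ι] {m : ℕ} {ℰ : Finset (Finset ι)}

lemma edgeApp_componentEdges {R : Type} [CommSemiring R] {a : ι} (x : ι → R)
    (i : component ℰ a) : edgeApp ℰ x i = edgeApp (componentEdges ℰ a) (fun v => x v) i := by
  classical
  refine sum_nbij' (fun e => e.subtype (· ∈ component ℰ a))
    (Finset.map (Function.Embedding.subtype _)) (fun e he => ?_) (fun e he => ?_)
    (fun e he => ?_) (fun e he => ?_) (fun e he => ?_)
  · obtain ⟨heℰ, hie⟩ := mem_filter.1 he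
    have hsub := subtype_map_of_mem fun v hv => mem_component_of_mem_edge i.2 heℰ hie hv
    exact mem_filter.2 ⟨mem_componentEdges.2 (by rwa [hsub]), mem_subtype.2 hie⟩
  · obtain ⟨he', hie⟩ := mem_filter.1 he
    exact mem_filter.2 ⟨mem_componentEdges.1 he', mem_map_of_mem _ hie⟩
  · exact subtype_map_of_mem fun v hv =>
      mem_component_of_mem_edge i.2 (mem_filter.1 he).1 (mem_filter.1 he).2 hv
  · ext v
    simp
  · obtain ⟨heℰ, hie⟩ := mem_filter.1 he
    have hsub := subtype_map_of_mem fun v hv => mem_component_of_mem_edge i.2 heℰ hie hv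
    calc ∏ v ∈ e.erase i, x v
        = ∏ v ∈ ((e.subtype (· ∈ component ℰ a)).erase i).map (Function.Embedding.subtype _),
            x v := by rw [map_erase, hsub]; rfl
      _ = _ := prod_map _ _ _

lemma eigenEq_componentEdges {R : Type} [CommSemiring R] {μ : R} {x : ι → R}
    (hx : EigenEq m ℰ μ x) (a : ι) : EigenEq m (componentEdges ℰ a) μ (fun v => x v) :=
  fun i => (edgeApp_componentEdges x i).symm.trans (hx i)

lemma edgeApp_extendComponent_of_notMem {R : Type} [CommSemiring R] (hunif : ∀ e ∈ ℰ, e.card = m)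
    (hm : 2 ≤ m) {a : ι} (x : component ℰ a → R) {i : ι} (hi : i ∉ component ℰ a) :
    edgeApp ℰ (extendComponent a x) i = 0 := by
  refine sum_eq_zero fun e he => ?_
  obtain ⟨heℰ, hie⟩ := mem_filter.1 he
  obtain ⟨w, hw, hwi⟩ := exists_mem_ne (by rw [hunif e heℰ]; omega : 1 < e.card) i
  refine prod_eq_zero (mem_erase.2 ⟨hwi, hw⟩) (extendComponent_of_notMem x fun hwa => hi ?_)
  exact mem_component_of_mem_edge hwa heℰ hw hie

lemma eigenEq_extendComponent {R : Type} [CommSemiring R] (hunif : ∀ e ∈ ℰ, e.card = m)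
    (hm : 2 ≤ m) {a : ι} {μ : R} {x : component ℰ a → R}
    (hx : EigenEq m (componentEdges ℰ a) μ x) : EigenEq m ℰ μ (extendComponent a x) := by
  intro i
  by_cases hi : i ∈ component ℰ a
  · have := edgeApp_componentEdges (extendComponent a x) ⟨i, hi⟩
    simp only [extendComponent_of_mem] at this
    rw [this, hx, extendComponent_of_mem x ⟨i, hi⟩]
  · rw [edgeApp_extendComponent_of_notMem hunif hm x hi, extendComponent_of_notMem x hi,
      zero_pow (by omega), mul_zero]

lemma edgeApp_eq_zero_of_isolated {R : Type} [CommSemiring R] (hunif : ∀ e ∈ ℰ, e.card = m)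
    (hm : 2 ≤ m) {u : ι} (hu : ∀ u', u' ≠ u → ¬ Relation.ReflTransGen (Linked ℰ) u u')
    (x : ι → R) : edgeApp ℰ x u = 0 := by
  refine sum_eq_zero fun e he => ?_
  obtain ⟨heℰ, hue⟩ := mem_filter.1 he
  obtain ⟨w, hw, hwu⟩ := exists_mem_ne (by rw [hunif e heℰ]; omega : 1 < e.card) u
  exact (hu w hwu (.single ⟨e, heℰ, hue, hw⟩)).elim

lemma EigenEq.add {R : Type} [CommSemiring R] (hunif : ∀ e ∈ ℰ, e.card = m) (hm : 2 ≤ m)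
    {μ : R} {x y : ι → R} (hx : EigenEq m ℰ μ x) (hy : EigenEq m ℰ μ y)
    (hedge : ∀ e ∈ ℰ, (∀ v ∈ e, x v = 0) ∨ ∀ v ∈ e, y v = 0) (hvert : ∀ v, x v = 0 ∨ y v = 0) :
    EigenEq m ℰ μ (fun v => x v + y v) := fun i => by
  have hsum : edgeApp ℰ (fun v => x v + y v) i = edgeApp ℰ x i + edgeApp ℰ y i := by
    rw [edgeApp, edgeApp, edgeApp, ← sum_add_distrib]
    refine sum_congr rfl fun e he => ?_
    obtain ⟨heℰ, hie⟩ := mem_filter.1 he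
    obtain ⟨w, hw⟩ : (e.erase i).Nonempty := by
      rw [← card_pos, card_erase_of_mem hie, hunif e heℰ]; omega
    rcases hedge e heℰ with h | h
    · rw [prod_eq_zero hw (h w (mem_of_mem_erase hw)), zero_add]
      exact prod_congr rfl fun v hv => by rw [h v (mem_of_mem_erase hv), zero_add]
    · rw [prod_eq_zero hw (h w (mem_of_mem_erase hw)), add_zero]
      exact prod_congr rfl fun v hv => by rw [h v (mem_of_mem_erase hv), add_zero]
  rw [hsum, hx i, hy i]
  rcases hvert i with h | h <;> simp [h, zero_pow (by omega : m - 1 ≠ 0)]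

lemma eigenEq_extendComponent_add {R : Type} [CommSemiring R] (hunif : ∀ e ∈ ℰ, e.card = m)
    (hm : 2 ≤ m) {a b : ι} (hab : ¬ Relation.ReflTransGen (Linked ℰ) a b) {μ : R}
    {x : component ℰ a → R} {y : component ℰ b → R} (hx : EigenEq m (componentEdges ℰ a) μ x)
    (hy : EigenEq m (componentEdges ℰ b) μ y) :
    EigenEq m ℰ μ (fun v => extendComponent a x v + extendComponent b y v) := by
  have hdisj : ∀ v ∈ component ℰ a, v ∉ component ℰ b := fun v hva hvb =>
    hab (hva.trans (reflTransGen_linked_symm hvb))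
  refine (eigenEq_extendComponent hunif hm hx).add hunif hm (eigenEq_extendComponent hunif hm hy)
    (fun e he => ?_) (fun v => ?_)
  · by_cases h : ∃ u ∈ e, u ∈ component ℰ a
    · obtain ⟨u, hue, hua⟩ := h
      exact .inr fun v hv => extendComponent_of_notMem y
        (hdisj v (mem_component_of_mem_edge hua he hue hv))
    · exact .inl fun v hv => extendComponent_of_notMem x fun hva => h ⟨v, hv, hva⟩
  · by_cases hva : v ∈ component ℰ a
    · exact .inr (extendComponent_of_notMem y (hdisj v hva))
    · exact .inl (extendComponent_of_notMem x hva)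

lemma restrict_isAdjTensor {B : Tensor ι m} (hB : IsAdjTensor m B ℰ) (a : ι) :
    IsAdjTensor m (restrict B (component ℰ a)) (componentEdges ℰ a) := by
  intro i f
  show B i (fun j => f j) = _
  rw [hB]
  simp only [mem_componentEdges, map_eq_image, image_insert, image_image, Function.comp_def,
    Function.Embedding.coe_subtype]

end ComponentEigenvectors

section SpectralRadius

variable {ι : Type} [Fintype ι] [DecidableEq ι] {m : ℕ} {B : Tensor ι m}
  {ℰ : Finset (Finset ι)}

lemma isEigPair_iff (hB : IsAdjTensor m B ℰ) (hunif : ∀ e ∈ ℰ, e.card = m) {μ : ℂ}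
    {x : ι → ℂ} : IsEigPair B μ x ↔ x ≠ 0 ∧ EigenEq m ℰ μ x := by
  simp only [IsEigPair, EigenEq, tApp_eq_edgeApp hB hunif]

lemma eigenEq_of_tApp_eq (hB : IsAdjTensor m B ℰ) (hunif : ∀ e ∈ ℰ, e.card = m) {μ : ℂ}
    {x : ι → ℂ} (hx : ∀ i, tApp B x i = μ * x i ^ (m - 1)) : EigenEq m ℰ μ x :=
  fun i => tApp_eq_edgeApp hB hunif x i ▸ hx i

lemma norm_le_card_of_eigenEq (hunif : ∀ e ∈ ℰ, e.card = m) {μ : ℂ} {x : ι → ℂ} (hx : x ≠ 0)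
    (hxeig : EigenEq m ℰ μ x) : ‖μ‖ ≤ ℰ.card := by
  obtain ⟨t, ht, hle, i, hi⟩ := exists_norm_le_mul_eq_mul hx (fun _ => one_pos)
  simp only [mul_one] at hle hi
  refine le_of_mul_le_mul_right ?_ (pow_pos ht (m - 1))
  calc ‖μ‖ * t ^ (m - 1) = ‖edgeApp ℰ x i‖ := by rw [hxeig i, norm_mul, norm_pow, hi]
    _ ≤ edgeApp ℰ (fun _ => t) i :=
        (norm_edgeApp_le x i).trans (edgeApp_mono (fun v => norm_nonneg _) hle i)
    _ = #{e ∈ ℰ | i ∈ e} * t ^ (m - 1) := by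
        rw [edgeApp, sum_congr rfl fun e he => by
          rw [prod_const, card_erase_of_mem (mem_filter.1 he).2, hunif e (mem_filter.1 he).1],
          sum_const, nsmul_eq_mul]
    _ ≤ ℰ.card * t ^ (m - 1) := by gcongr; exact filter_subset _ _

lemma bddAbove_norm_eigenvalues (hB : IsAdjTensor m B ℰ) (hunif : ∀ e ∈ ℰ, e.card = m) :
    BddAbove ((‖·‖) '' Eigenvalues B) := by
  refine ⟨ℰ.card, ?_⟩
  rintro _ ⟨μ, ⟨x, hx⟩, rfl⟩
  obtain ⟨hx0, hxeig⟩ := (isEigPair_iff hB hunif).1 hx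
  exact norm_le_card_of_eigenEq hunif hx0 hxeig

theorem specRad_eq_of_eigenEq [Nonempty ι] (hB : IsAdjTensor m B ℰ)
    (hunif : ∀ e ∈ ℰ, e.card = m) {lam : ℝ} (hlam : 0 ≤ lam) {z : ι → ℝ} (hz : ∀ v, 0 < z v)
    (hzeig : EigenEq m ℰ lam z) : specRad B = lam := by
  refine IsGreatest.csSup_eq ⟨⟨lam, ⟨_, (isEigPair_iff hB hunif).2 ⟨?_, hzeig.ofReal⟩⟩,
    by simp [hlam]⟩, ?_⟩
  · exact Function.ne_iff.2 ⟨Classical.arbitrary ι, by simp [(hz _).ne']⟩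
  · rintro _ ⟨μ, ⟨x, hx⟩, rfl⟩
    obtain ⟨hx0, hxeig⟩ := (isEigPair_iff hB hunif).1 hx
    exact norm_le_of_eigenEq hunif hz hzeig hx0 hxeig

end SpectralRadius

-- Classical decidability of membership provides the `Fintype (component ℰ a)` instance that
-- `specRad (restrict B (component ℰ a))` needs.
open Classical

section Eigenvariety

variable {ι : Type} [Fintype ι] [DecidableEq ι] {m : ℕ} {B : Tensor ι m}
  {ℰ : Finset (Finset ι)}

theorem exists_pos_eigenEq_restrict (hB : IsAdjTensor m B ℰ) (hunif : ∀ e ∈ ℰ, e.card = m)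
    (hm : 2 ≤ m) {a : ι} (ha : ∃ a', a' ≠ a ∧ Relation.ReflTransGen (Linked ℰ) a a') :
    0 < specRad (restrict B (component ℰ a)) ∧ ∃ z : component ℰ a → ℝ, (∀ v, 0 < z v) ∧
      EigenEq m (componentEdges ℰ a) (specRad (restrict B (component ℰ a))) z := by
  have : Nonempty (component ℰ a) := ⟨⟨a, .refl⟩⟩
  have hunif' : ∀ e ∈ componentEdges ℰ a, e.card = m := fun e =>
    card_of_mem_componentEdges hunif
  obtain ⟨lam, hlam, z, hz, hzeig⟩ := exists_pos_eigenEq (reflTransGen_componentEdges a) hunif'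
    (by omega) (componentEdges_nonempty ha)
  rw [specRad_eq_of_eigenEq (restrict_isAdjTensor hB a) hunif' hlam.le hz hzeig]
  exact ⟨hlam, z, hz, hzeig⟩

theorem specRad_restrict_le (hB : IsAdjTensor m B ℰ) (hunif : ∀ e ∈ ℰ, e.card = m)
    (hm : 2 ≤ m) {a : ι} (ha : ∃ a', a' ≠ a ∧ Relation.ReflTransGen (Linked ℰ) a a') :
    specRad (restrict B (component ℰ a)) ≤ specRad B := by
  obtain ⟨hpos, z, hz, hzeig⟩ := exists_pos_eigenEq_restrict hB hunif hm ha
  have hz0 : (fun v => (z v : ℂ)) ≠ 0 := Function.ne_iff.2 ⟨⟨a, .refl⟩, by simp [(hz _).ne']⟩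
  refine le_csSup (bddAbove_norm_eigenvalues hB hunif) ⟨_, ⟨_, (isEigPair_iff hB hunif).2
    ⟨extendComponent_ne_zero hz0, eigenEq_extendComponent hunif hm hzeig.ofReal⟩⟩, ?_⟩
  simp [hpos.le]

theorem specRad_pos (hB : IsAdjTensor m B ℰ) (hunif : ∀ e ∈ ℰ, e.card = m) (hm : 2 ≤ m)
    (hne : ℰ.Nonempty) : 0 < specRad B := by
  obtain ⟨e, he⟩ := hne
  obtain ⟨a, ha, b, hb, hab⟩ := one_lt_card.1 (by rw [hunif e he]; omega : 1 < e.card)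
  have hbig : ∃ b, b ≠ a ∧ Relation.ReflTransGen (Linked ℰ) a b :=
    ⟨b, Ne.symm hab, .single ⟨e, he, ha, hb⟩⟩
  exact (exists_pos_eigenEq_restrict hB hunif hm hbig).1.trans_le
    (specRad_restrict_le hB hunif hm hbig)

theorem specRad_restrict_eq_of_eigenEq (hB : IsAdjTensor m B ℰ) (hunif : ∀ e ∈ ℰ, e.card = m)
    (hm : 2 ≤ m) (hne : ℰ.Nonempty) {x : ι → ℂ} (hx : EigenEq m ℰ (specRad B : ℂ) x) {u : ι}
    (hu : x u ≠ 0) : (∃ u', u' ≠ u ∧ Relation.ReflTransGen (Linked ℰ) u u') ∧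
      specRad (restrict B (component ℰ u)) = specRad B := by
  have hρ := specRad_pos hB hunif hm hne
  have hbig : ∃ u', u' ≠ u ∧ Relation.ReflTransGen (Linked ℰ) u u' := by
    by_contra! h
    have := hx u
    rw [edgeApp_eq_zero_of_isolated hunif hm h] at this
    exact mul_ne_zero (Complex.ofReal_ne_zero.2 hρ.ne') (pow_ne_zero _ hu) this.symm
  refine ⟨hbig, le_antisymm (specRad_restrict_le hB hunif hm hbig) ?_⟩
  obtain ⟨-, z, hz, hzeig⟩ := exists_pos_eigenEq_restrict hB hunif hm hbig
  have := norm_le_of_eigenEq (fun e => card_of_mem_componentEdges hunif) hz hzeig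
    (x := fun v => x v) (Function.ne_iff.2 ⟨⟨u, .refl⟩, hu⟩) (eigenEq_componentEdges hx u)
  rwa [Complex.norm_real, Real.norm_of_nonneg hρ.le] at this

/-- By Perron–Frobenius rigidity, every point of `PV_ρ` is `[z ω]` for the Perron vector `z` of
the one component of spectral radius `ρ(B)` and some `m`-th roots of unity `ω v`. -/
theorem PV_specRad_finite (hB : IsAdjTensor m B ℰ) (hunif : ∀ e ∈ ℰ, e.card = m) (hm : 2 ≤ m)
    (hne : ℰ.Nonempty)
    (hone : ∀ i j : ι, (∃ i', i' ≠ i ∧ Relation.ReflTransGen (Linked ℰ) i i') →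
      (∃ j', j' ≠ j ∧ Relation.ReflTransGen (Linked ℰ) j j') →
      specRad (restrict B (component ℰ i)) = specRad B →
      specRad (restrict B (component ℰ j)) = specRad B → Relation.ReflTransGen (Linked ℰ) i j) :
    (PV B (specRad B : ℂ)).Finite := by
  rcases (PV B (specRad B : ℂ)).eq_empty_or_nonempty with h | ⟨-, x₀, hx₀, -, hx₀eig⟩
  · exact h ▸ Set.finite_empty
  obtain ⟨u, hu⟩ := Function.ne_iff.1 hx₀
  obtain ⟨hbig, hspec⟩ :=
    specRad_restrict_eq_of_eigenEq hB hunif hm hne (eigenEq_of_tApp_eq hB hunif hx₀eig) hu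
  obtain ⟨-, z, hz, hzeig⟩ := exists_pos_eigenEq_restrict hB hunif hm hbig
  rw [hspec] at hzeig
  let F (ω : {ω : component ℰ u → ℂ // ∀ v, ω v ^ m = 1}) : Projectivization ℂ (ι → ℂ) :=
    Projectivization.mk ℂ (extendComponent u fun v => z v * ω.1 v) <| extendComponent_ne_zero <|
      Function.ne_iff.2 ⟨⟨u, .refl⟩, mul_ne_zero (Complex.ofReal_ne_zero.2 (hz _).ne')
        ((pow_ne_zero_iff (by omega)).1 (ω.2 _ ▸ one_ne_zero))⟩
  have : Finite {ω : component ℰ u → ℂ // ∀ v, ω v ^ m = 1} :=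
    (finite_setOf_forall_pow_eq_one (by omega)).to_subtype
  refine (Set.finite_range F).subset ?_
  rintro _ ⟨x, hx, rfl, hxeig⟩
  have hsupp : ∀ v, x v ≠ 0 → v ∈ component ℰ u := fun v hv => by
    obtain ⟨hbigv, hspecv⟩ :=
      specRad_restrict_eq_of_eigenEq hB hunif hm hne (eigenEq_of_tApp_eq hB hunif hxeig) hv
    exact hone u v hbig hbigv hspec hspecv
  obtain ⟨w, hw⟩ := Function.ne_iff.1 hx
  obtain ⟨c, -, ω, hω, hxω⟩ := exists_eq_mul_root_of_eigenEq (reflTransGen_componentEdges u)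
    (fun e => card_of_mem_componentEdges hunif) (by omega) hz hzeig (x := fun v => x v)
    (Function.ne_iff.2 ⟨⟨w, hsupp w hw⟩, hw⟩)
    (eigenEq_componentEdges (eigenEq_of_tApp_eq hB hunif hxeig) u)
  refine ⟨⟨ω, hω⟩, ((Projectivization.mk_eq_mk_iff' _ _ _ _ _).2 ⟨c, funext fun v => ?_⟩).symm⟩
  by_cases hv : v ∈ component ℰ u
  · simp [extendComponent_of_mem _ ⟨v, hv⟩, hxω ⟨v, hv⟩, mul_assoc]
  · rw [Pi.smul_apply, extendComponent_of_notMem _ hv, smul_zero]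
    exact (not_imp_comm.1 (hsupp v) hv).symm

theorem PV_specRad_infinite (hB : IsAdjTensor m B ℰ) (hunif : ∀ e ∈ ℰ, e.card = m) (hm : 2 ≤ m)
    {i j : ι} (hij : ¬ Relation.ReflTransGen (Linked ℰ) i j)
    (hi : ∃ i', i' ≠ i ∧ Relation.ReflTransGen (Linked ℰ) i i')
    (hj : ∃ j', j' ≠ j ∧ Relation.ReflTransGen (Linked ℰ) j j')
    (hspeci : specRad (restrict B (component ℰ i)) = specRad B)
    (hspecj : specRad (restrict B (component ℰ j)) = specRad B) :
    (PV B (specRad B : ℂ)).Infinite := by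
  obtain ⟨-, z₁, hz₁, hz₁eig⟩ := exists_pos_eigenEq_restrict hB hunif hm hi
  obtain ⟨-, z₂, hz₂, hz₂eig⟩ := exists_pos_eigenEq_restrict hB hunif hm hj
  rw [hspeci] at hz₁eig
  rw [hspecj] at hz₂eig
  set Y : ℂ → ι → ℂ := fun t v =>
    extendComponent i (fun w => (z₁ w : ℂ)) v + extendComponent j (fun w => t * z₂ w) v
  have hYeig : ∀ t, EigenEq m ℰ (specRad B : ℂ) (Y t) := fun t =>
    eigenEq_extendComponent_add hunif hm hij hz₁eig.ofReal
      (hz₂eig.ofReal.const_mul (fun e => card_of_mem_componentEdges hunif) t)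
  have hYi : ∀ t, Y t i = z₁ ⟨i, .refl⟩ := fun t => by
    dsimp only [Y]
    rw [extendComponent_of_mem _ ⟨i, .refl⟩, extendComponent_of_notMem _
      fun h => hij (reflTransGen_linked_symm h), add_zero]
  have hYj : ∀ t, Y t j = t * z₂ ⟨j, .refl⟩ := fun t => by
    dsimp only [Y]
    rw [extendComponent_of_notMem _ hij, extendComponent_of_mem _ ⟨j, .refl⟩, zero_add]
  have hY0 : ∀ t, Y t ≠ 0 := fun t =>
    Function.ne_iff.2 ⟨i, by rw [hYi]; exact Complex.ofReal_ne_zero.2 (hz₁ _).ne'⟩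
  refine Set.infinite_of_injective_forall_mem (f := fun t => Projectivization.mk ℂ (Y t) (hY0 t))
    (fun s t hst => ?_) fun t => ⟨Y t, hY0 t, rfl, fun v => by
      rw [tApp_eq_edgeApp hB hunif]; exact hYeig t v⟩
  obtain ⟨a, ha⟩ := (Projectivization.mk_eq_mk_iff' _ _ _ _ _).1 hst
  have hai := congrFun ha i
  have haj := congrFun ha j
  simp only [Pi.smul_apply, smul_eq_mul, hYi, hYj] at hai haj
  rw [(mul_eq_right₀ (Complex.ofReal_ne_zero.2 (hz₁ _).ne')).1 hai, one_mul] at haj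
  exact (mul_right_cancel₀ (Complex.ofReal_ne_zero.2 (hz₂ _).ne') haj).symm

end Eigenvariety

theorem stmt19_general {n m : ℕ} (hm : 2 ≤ m) (E : Finset (Finset (Fin n)))
    (hunif : ∀ e ∈ E, e.card = m) (hE : E.Nonempty) :
    (PV (adjT n m E) ((specRad (adjT n m E) : ℝ) : ℂ)).Infinite ↔
      ∃ i j : Fin n, ¬ HConn E i j ∧
        (∃ i' : Fin n, i' ≠ i ∧ HConn E i i') ∧
        (∃ j' : Fin n, j' ≠ j ∧ HConn E j j') ∧
        specRad (restrict (adjT n m E) {u | HConn E i u}) = specRad (adjT n m E) ∧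
        specRad (restrict (adjT n m E) {u | HConn E j u}) = specRad (adjT n m E) := by
  have hA := adjT_isAdjTensor n m E
  refine ⟨fun hinf => ?_, fun ⟨i, j, hij, hi, hj, hspeci, hspecj⟩ =>
    PV_specRad_infinite hA hunif hm hij hi hj hspeci hspecj⟩
  by_contra! h
  exact hinf (PV_specRad_finite hA hunif hm hE fun i j hi hj hspeci hspecj =>
    by_contra fun hij => h i j hij hi hj hspeci hspecj)

/-- For a disconnected `m`-uniform hypergraph `G` with at least one edge, `PV_ρ(A(G))` is
infinite (has dimension greater than zero) iff `G` has at least two connected components,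
each on at least two vertices, with spectral radius equal to `ρ`. -/
theorem stmt19 {n m : ℕ} (hm : 2 ≤ m) (E : Finset (Finset (Fin n)))
    (hunif : ∀ e ∈ E, e.card = m) (hE : E.Nonempty)
    (hdisc : ¬ ∀ u w : Fin n, HConn E u w) :
    (PV (adjT n m E) ((specRad (adjT n m E) : ℝ) : ℂ)).Infinite ↔
      ∃ i j : Fin n, ¬ HConn E i j ∧
        (∃ i' : Fin n, i' ≠ i ∧ HConn E i i') ∧
        (∃ j' : Fin n, j' ≠ j ∧ HConn E j j') ∧
        specRad (restrict (adjT n m E) {u | HConn E i u}) = specRad (adjT n m E) ∧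
        specRad (restrict (adjT n m E) {u | HConn E j u}) = specRad (adjT n m E) :=
  stmt19_general hm E hunif hE

end PaperTensor
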